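/- Let G = ⟨s_1,…,s_r⟩ be the free group of rank r ≥ 1, let T be a measure-preserving action of G on a standard probability space (X,μ), let φ : X → A be an observable with A finite, and let B = B(e,m) for some m ≥ 0. Let σ : G → Sym(n) be a homomorphism and ψ : {1,…,n} → A^B a map, and set ω := π_e∘ψ. Then |{1 ≤ i ≤ n : ψ(i) ≠ (ω(σ(g)i))_{g∈B}}| ≤ n·|B|·d^*_σ(φ^B, ψ). -/

import Mathlib

open MeasureTheory Real Filter

noncomputable section

/-- The Shannon entropy `H(φ)` of an observable `φ : X → A` with respect to `μ`. -/
def obsEntropy {X A : Type*} [MeasurableSpace X] (μ : Measure X) (φ : X → A) : ℝ :=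
  ∑' a : A, Real.negMulLog ((μ (φ ⁻¹' {a})).toReal)

/-- The joint observable `φ^H : X → A^H`, `φ^H(x) = (φ(T_h x))_{h ∈ H}`. -/
def obsJoin {G X A : Type*} (T : G → X → X) (φ : X → A) (H : Set G) : X → (H → A) :=
  fun x h => φ (T (h : G) x)

/-- `F(T,φ) = (1-2r) H(φ) + ∑_{i=1}^r H(φ ∨ T_{s_i}φ)` for the free group of rank `r`,
with free generators `s_i = FreeGroup.of i`. -/
def FF (r : ℕ) {X A : Type*} [MeasurableSpace X] (μ : Measure X)
    (T : FreeGroup (Fin r) → X → X) (φ : X → A) : ℝ :=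
  (1 - 2 * (r : ℝ)) * obsEntropy μ φ +
    ∑ i : Fin r, obsEntropy μ (fun x => (φ x, φ (T (FreeGroup.of i) x)))

/-- The ball `B(e,n)` of radius `n` about the identity of the free group of rank `r`
in the word metric of the free generating set. -/
def ball (r n : ℕ) : Set (FreeGroup (Fin r)) :=
  {g | (FreeGroup.toWord g).length ≤ n}

/-- The `f`-invariant `f(T,φ) = inf_n F(T, φ^{B(e,n)})`. -/
def fInv (r : ℕ) {X A : Type*} [MeasurableSpace X] (μ : Measure X)
    (T : FreeGroup (Fin r) → X → X) (φ : X → A) : ℝ :=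
  ⨅ n : ℕ, FF r μ T (obsJoin T φ (ball r n))

/-- `ψ^H : {1,…,n} → A^H`, `ψ^H(j) = (ψ(σ(h)j))_{h ∈ H}`. -/
def permJoin {G A : Type*} [Group G] {n : ℕ} (σ : G →* Equiv.Perm (Fin n))
    (ψ : Fin n → A) (H : Set G) : Fin n → (H → A) :=
  fun j h => ψ (σ (h : G) j)

/-- `d^H_σ(φ,ψ)`: the `ℓ¹`-distance between the distribution of `φ^H` under `μ`
and the distribution of `ψ^H` under the uniform measure on `{1,…,n}`. -/
def dH {G X A : Type*} [Group G] [MeasurableSpace X] (μ : Measure X) {n : ℕ}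
    (T : G → X → X) (φ : X → A) (σ : G →* Equiv.Perm (Fin n)) (ψ : Fin n → A)
    (H : Set G) : ℝ :=
  ∑' w : H → A,
    |(μ (obsJoin T φ H ⁻¹' {w})).toReal -
      (Nat.card {j : Fin n // permJoin σ ψ H j = w} : ℝ) / n|

/-- `d^*_σ(φ,ψ) = ∑_{i=1}^r d^{{e,s_i}}_σ(φ,ψ)`. -/
def dStar (r : ℕ) {X A : Type*} [MeasurableSpace X] (μ : Measure X) {n : ℕ}
    (T : FreeGroup (Fin r) → X → X) (φ : X → A)
    (σ : FreeGroup (Fin r) →* Equiv.Perm (Fin n)) (ψ : Fin n → A) : ℝ :=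
  ∑ i : Fin r, dH μ T φ σ ψ {1, FreeGroup.of i}

/-- The expected number, over a uniformly random homomorphism
`σ : FreeGroup (Fin r) →* Sym(n)` (equivalently, over a uniformly random `r`-tuple of
permutations), of maps `ψ : {1,…,n} → A` with `d^H_σ(φ,ψ) ≤ ε`. -/
def Ecount (r : ℕ) {X A : Type*} [MeasurableSpace X] (μ : Measure X)
    (T : FreeGroup (Fin r) → X → X) (φ : X → A) (H : Set (FreeGroup (Fin r)))
    (ε : ℝ) (n : ℕ) : ℝ :=
  (∑ σs : Fin r → Equiv.Perm (Fin n),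
      (Nat.card {ψ : Fin n → A // dH μ T φ (FreeGroup.lift σs) ψ H ≤ ε} : ℝ)) /
    (n.factorial : ℝ) ^ r

/-- `h(Σ,T,φ)` where `Σ = {μ_n}` and `μ_n` is the uniform probability measure on the set of
homomorphisms `FreeGroup (Fin r) →* Sym(n)`. -/
def hSigma (r : ℕ) {X A : Type*} [MeasurableSpace X] (μ : Measure X)
    (T : FreeGroup (Fin r) → X → X) (φ : X → A) : ℝ :=
  ⨅ (Hs : Finset (FreeGroup (Fin r))) (ε : ℝ) (_ : 0 < ε),
    Filter.atTop.limsup fun n : ℕ => Real.log (Ecount r μ T φ (↑Hs) ε n) / n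

theorem one_mem_ball (r m : ℕ) : (1 : FreeGroup (Fin r)) ∈ ball r m := by
  simp [ball, FreeGroup.toWord_one]

/-!
If `ψ i` differs from the labelling `(ω(σ(g)i))_{g ∈ B}` read off along the orbit of `i`, follow
the reduced word of a witness `g ∈ B` letter by letter: at some point `σ(u)i` with `u ∈ B`, the
labels of two neighbours `j` and `σ(s_k)j` disagree on the overlap of the two translated balls.
Such a disagreement is a pattern on `{e, s_k}` that `φ^B` never produces, so its `μ`-measure is
zero and the number of such `j` is at most `n d^{{e,s_k}}_σ(φ^B, ψ)`. Summing over `u ∈ B` and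
over `k`, using that each `σ(u)` is a bijection, gives the bound.
-/

theorem Nat.card_subtype_le_sum_of_forall_exists {α ι : Type*} [Finite α] [Fintype ι]
    {P : α → Prop} {Q : ι → α → Prop} (h : ∀ a, P a → ∃ i, Q i a) :
    Nat.card {a // P a} ≤ ∑ i, Nat.card {a // Q i a} := by
  change Nat.card {a | P a} ≤ ∑ i, Nat.card {a | Q i a}
  simp only [Nat.card_coe_set_eq]
  calc {a | P a}.ncard ≤ (⋃ i, {a | Q i a}).ncard :=
        Set.ncard_le_ncard (fun a ha => by simpa using h a ha) (Set.toFinite _)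
    _ ≤ ∑ i, {a | Q i a}.ncard := Set.ncard_iUnion_le_of_fintype _

theorem FreeGroup.exists_eq_mul_of_ne_one {α : Type*} [DecidableEq α] {g : FreeGroup α}
    (hg : g ≠ 1) : ∃ g' a, (g = g' * of a ∨ g = g' * (of a)⁻¹) ∧ g'.norm < g.norm := by
  obtain ⟨l, ⟨a, b⟩, hl⟩ : ∃ l x, g.toWord = l ++ [x] :=
    (List.eq_nil_or_concat' g.toWord).resolve_left (by simpa using hg)
  have hl' : (mk l).toWord = l := by
    rw [toWord_mk]
    exact (isReduced_toWord.infix (hl ▸ List.infix_append [] l [(a, b)])).reduce_eq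
  have hg' : g = mk l * mk [(a, b)] := by rw [mul_mk, ← hl, mk_toWord]
  refine ⟨mk l, a, ?_, by simp [norm, hl, hl']⟩
  cases b
  · exact Or.inr (hg'.trans (by rw [of, inv_mk]; rfl))
  · exact Or.inl hg'

theorem mem_ball_iff {r m : ℕ} {g : FreeGroup (Fin r)} : g ∈ ball r m ↔ g.norm ≤ m := Iff.rfl

instance (r m : ℕ) : Finite (ball r m) :=
  ((List.finite_length_le _ m).preimage FreeGroup.toWord_injective.injOn).to_subtype

section Agreement

variable {G α A : Type*} [Group G] {B : Set G}

def AgreesAlong (σ : G →* Equiv.Perm α) (ψ : α → B → A) (t : G) (j : α) : Prop :=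
  ∀ g (hg : g ∈ B) (hgt : g * t ∈ B), ψ (σ t j) ⟨g, hg⟩ = ψ j ⟨g * t, hgt⟩

def PatternAgreesAlong (t : G) (w : ({1, t} : Set G) → B → A) : Prop :=
  ∀ g (hg : g ∈ B) (hgt : g * t ∈ B),
    w ⟨t, Set.mem_insert_of_mem 1 rfl⟩ ⟨g, hg⟩ = w ⟨1, Set.mem_insert 1 _⟩ ⟨g * t, hgt⟩

theorem AgreesAlong.inv {σ : G →* Equiv.Perm α} {ψ : α → B → A} {t : G} {j : α}
    (h : AgreesAlong σ ψ t (σ t⁻¹ j)) : AgreesAlong σ ψ t⁻¹ j := by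
  intro g hg hgt
  have := h (g * t⁻¹) hgt (by simpa using hg)
  simp only [← Equiv.Perm.mul_apply, ← map_mul, mul_inv_cancel, map_one,
    Equiv.Perm.one_apply, inv_mul_cancel_right] at this
  exact this.symm

theorem agreesAlong_iff {n : ℕ} (σ : G →* Equiv.Perm (Fin n)) (ψ : Fin n → B → A) (t : G)
    (j : Fin n) : AgreesAlong σ ψ t j ↔ PatternAgreesAlong t (permJoin σ ψ {1, t} j) := by
  simp [AgreesAlong, PatternAgreesAlong, permJoin]

theorem patternAgreesAlong_obsJoin {X : Type*} {T : G → X → X}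
    (hTmul : ∀ g h x, T (g * h) x = T g (T h x)) (φ : X → A) (t : G) (x : X) :
    PatternAgreesAlong t (obsJoin T (obsJoin T φ B) {1, t} x) := by
  intro g _ _
  simp only [obsJoin, ← hTmul, mul_one]

end Agreement

theorem card_le_mul_dH {G X C : Type*} [Group G] [MeasurableSpace X] (μ : Measure X) {n : ℕ}
    (T : G → X → X) (χ : X → C) (σ : G →* Equiv.Perm (Fin n)) (ψ : Fin n → C) (H : Set G)
    [Finite (H → C)] (P : (H → C) → Prop) (hP : ∀ x, ¬ P (obsJoin T χ H x)) :
    (Nat.card {j // P (permJoin σ ψ H j)} : ℝ) ≤ n * dH μ T χ σ ψ H := by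
  classical
  have := Fintype.ofFinite (H → C)
  rcases Nat.eq_zero_or_pos n with rfl | hn
  · simp
  set c : (H → C) → ℝ := fun w => Nat.card {j // permJoin σ ψ H j = w}
  have hcount : (Nat.card {j // P (permJoin σ ψ H j)} : ℝ) = ∑ w with P w, c w := by
    rw [← Nat.card_congr (Equiv.sigmaSubtypeFiberEquivSubtype (permJoin σ ψ H) (q := P)
      fun j => Iff.rfl), Nat.card_sigma, Finset.sum_subtype _ (p := P) (by simp) c, Nat.cast_sum]
  have hterm : ∀ w, P w → c w ≤ n * |(μ (obsJoin T χ H ⁻¹' {w})).toReal - c w / n| := by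
    intro w hw
    rw [Set.preimage_singleton_eq_empty.2 (by rintro ⟨x, rfl⟩; exact hP x hw), measure_empty,
      ENNReal.toReal_zero, zero_sub, abs_neg, abs_of_nonneg (by positivity),
      mul_div_cancel₀ _ (by positivity)]
  calc _ = ∑ w with P w, c w := hcount
    _ ≤ ∑ w with P w, n * |(μ (obsJoin T χ H ⁻¹' {w})).toReal - c w / n| :=
      Finset.sum_le_sum fun w hw => hterm w (Finset.mem_filter.1 hw).2
    _ ≤ ∑ w, n * |(μ (obsJoin T χ H ⁻¹' {w})).toReal - c w / n| :=
      Finset.sum_le_sum_of_subset_of_nonneg (Finset.filter_subset _ _)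
        fun _ _ _ => by positivity
    _ = n * dH μ T χ σ ψ H := by rw [dH, tsum_fintype, Finset.mul_sum]

theorem card_not_agreesAlong_le {G X A : Type*} [Group G] [MeasurableSpace X] (μ : Measure X)
    {T : G → X → X} (hTmul : ∀ g h x, T (g * h) x = T g (T h x)) [Finite A] (φ : X → A)
    {B : Set G} [Finite B] {n : ℕ} (σ : G →* Equiv.Perm (Fin n)) (ψ : Fin n → B → A) (t : G) :
    (Nat.card {j // ¬ AgreesAlong σ ψ t j} : ℝ) ≤ n * dH μ T (obsJoin T φ B) σ ψ {1, t} := by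
  have h := card_le_mul_dH μ T (obsJoin T φ B) σ ψ {1, t} (fun w => ¬ PatternAgreesAlong t w)
    fun x => not_not.2 (patternAgreesAlong_obsJoin hTmul φ t x)
  simpa only [agreesAlong_iff] using h

open FreeGroup in
theorem apply_eq_apply_one_of_agreesAlong {r m : ℕ} {α A : Type*}
    (σ : FreeGroup (Fin r) →* Equiv.Perm α) (ψ : α → ball r m → A) (d : ℕ) (i : α)
    (hi : ∀ u : FreeGroup (Fin r), u.norm ≤ d → ∀ k, AgreesAlong σ ψ (of k) (σ u i))
    (g : FreeGroup (Fin r)) (hg : g ∈ ball r m) (hgd : g.norm ≤ d) :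
    ψ i ⟨g, hg⟩ = ψ (σ g i) ⟨1, one_mem_ball r m⟩ := by
  induction d generalizing i g with
  | zero =>
    obtain rfl : g = 1 := norm_eq_zero.1 (Nat.le_zero.1 hgd)
    simp
  | succ d ih =>
    obtain rfl | hg1 := eq_or_ne g 1
    · simp
    -- peel off the last letter `t` of `g = g' * t` and continue from `σ t i`
    obtain ⟨g', t, rfl, hlt, ht, hti⟩ : ∃ g' t, g = g' * t ∧ g'.norm < g.norm ∧ t.norm ≤ 1 ∧
        AgreesAlong σ ψ t i := by
      obtain ⟨g', k, rfl | rfl, hlt⟩ := exists_eq_mul_of_ne_one hg1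
      · exact ⟨g', of k, rfl, hlt, (norm_of k).le, by simpa using hi 1 (by simp) k⟩
      · exact ⟨g', _, rfl, hlt, by simp, (hi _ (by simp) k).inv⟩
    have hg' : g' ∈ ball r m := mem_ball_iff.2 (hlt.le.trans hg)
    have hpath := ih (σ t i) (fun u hu k => by
        simpa using hi (u * t) ((norm_mul_le u t).trans (by omega)) k) g' hg' (by omega)
    rw [← hti g' hg' hg, hpath, _root_.map_mul, Equiv.Perm.mul_apply]

theorem eq_permJoin_of_agreesAlong {r m n : ℕ} {A : Type*}
    (σ : FreeGroup (Fin r) →* Equiv.Perm (Fin n)) (ψ : Fin n → ball r m → A) (i : Fin n)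
    (h : ∀ u ∈ ball r m, ∀ k, AgreesAlong σ ψ (FreeGroup.of k) (σ u i)) :
    ψ i = permJoin σ (fun j => ψ j ⟨1, one_mem_ball r m⟩) (ball r m) i :=
  funext fun ⟨g, hg⟩ => apply_eq_apply_one_of_agreesAlong σ ψ m i h g hg hg

theorem card_ne_permJoin_le {r m n : ℕ} {A : Type*}
    (σ : FreeGroup (Fin r) →* Equiv.Perm (Fin n)) (ψ : Fin n → ball r m → A) :
    Nat.card {i // ψ i ≠ permJoin σ (fun j => ψ j ⟨1, one_mem_ball r m⟩) (ball r m) i} ≤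
      (ball r m).ncard * ∑ k, Nat.card {j // ¬ AgreesAlong σ ψ (FreeGroup.of k) j} := by
  have := Fintype.ofFinite (ball r m)
  have hbad : ∀ i, ψ i ≠ permJoin σ (fun j => ψ j ⟨1, one_mem_ball r m⟩) (ball r m) i →
      ∃ p : ball r m × Fin r, ¬ AgreesAlong σ ψ (FreeGroup.of p.2) (σ p.1 i) := by
    intro i hi
    by_contra! h
    exact hi (eq_permJoin_of_agreesAlong σ ψ i fun u hu k => h (⟨u, hu⟩, k))
  calc _ ≤ ∑ p : ball r m × Fin r,
          Nat.card {i // ¬ AgreesAlong σ ψ (FreeGroup.of p.2) (σ p.1 i)} :=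
        Nat.card_subtype_le_sum_of_forall_exists hbad
    _ = ∑ p : ball r m × Fin r, Nat.card {j // ¬ AgreesAlong σ ψ (FreeGroup.of p.2) j} :=
        Finset.sum_congr rfl fun p _ => Nat.card_congr ((σ p.1).subtypeEquiv fun _ => Iff.rfl)
    _ = _ := by
        simp only [Fintype.sum_prod_type, Finset.sum_const, smul_eq_mul, Finset.card_univ,
          Fintype.card_eq_nat_card, Nat.card_coe_set_eq]

theorem card_bad_le_general {r : ℕ}
    {X : Type*} [MeasurableSpace X]
    (μ : Measure X)
    (T : FreeGroup (Fin r) → X → X)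
    (hTmul : ∀ g h x, T (g * h) x = T g (T h x))
    {A : Type*} [Fintype A]
    (φ : X → A) (m : ℕ) {n : ℕ}
    (σ : FreeGroup (Fin r) →* Equiv.Perm (Fin n))
    (ψ : Fin n → (ball r m → A)) :
    (Nat.card {i : Fin n //
        ψ i ≠ permJoin σ (fun j => ψ j ⟨1, one_mem_ball r m⟩) (ball r m) i} : ℝ) ≤
      n * ((ball r m).ncard : ℝ) * dStar r μ T (obsJoin T φ (ball r m)) σ ψ := by
  calc _ ≤ (ball r m).ncard * ∑ k, (Nat.card {j // ¬ AgreesAlong σ ψ (FreeGroup.of k) j} : ℝ) := by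
        exact_mod_cast card_ne_permJoin_le σ ψ
    _ ≤ (ball r m).ncard * ∑ k, n * dH μ T (obsJoin T φ (ball r m)) σ ψ {1, FreeGroup.of k} := by
        gcongr with k
        exact card_not_agreesAlong_le μ hTmul φ σ ψ _
    _ = n * (ball r m).ncard * dStar r μ T (obsJoin T φ (ball r m)) σ ψ := by
        rw [dStar, ← Finset.mul_sum]
        ring

/-- Let `B = B(e,m)`, let `σ : G →* Sym(n)` be a homomorphism, `ψ : {1,…,n} → A^B` a map and
`ω = π_e ∘ ψ`. Then the number of `i` with `ψ(i) ≠ (ω(σ(g)i))_{g ∈ B}` is at most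
`n|B| d^*_σ(φ^B,ψ)`. -/
theorem card_bad_le {r : ℕ} (hr : 1 ≤ r)
    {X : Type*} [MeasurableSpace X] [StandardBorelSpace X]
    (μ : Measure X) [IsProbabilityMeasure μ]
    (T : FreeGroup (Fin r) → X → X)
    (hT : ∀ g, MeasurePreserving (T g) μ μ)
    (hTmul : ∀ g h x, T (g * h) x = T g (T h x))
    {A : Type*} [Fintype A] [MeasurableSpace A] [MeasurableSingletonClass A]
    (φ : X → A) (hφ : Measurable φ) (m : ℕ) {n : ℕ}
    (σ : FreeGroup (Fin r) →* Equiv.Perm (Fin n))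
    (ψ : Fin n → (ball r m → A)) :
    (Nat.card {i : Fin n //
        ψ i ≠ permJoin σ (fun j => ψ j ⟨1, one_mem_ball r m⟩) (ball r m) i} : ℝ) ≤
      n * ((ball r m).ncard : ℝ) * dStar r μ T (obsJoin T φ (ball r m)) σ ψ :=
  card_bad_le_general μ T hTmul φ m σ ψ
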